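/- Correctness of the reduction: let the Set Cover instance satisfy ⋃_{S ∈ 𝒮} S = U, let q > 2 · (|𝒮| + Σ_{S ∈ 𝒮} |S|), and let k ≥ 1. If A* ⊆ A is feasible and minimizes obj_k among all feasible subsets of A, then 𝒞* := {S ∈ 𝒮 | P_S ⊆ A*} is a minimum-size set cover of U, i.e., ⋃_{S ∈ 𝒞*} S = U and |𝒞*| ≤ |𝒞| for every 𝒞 ⊆ 𝒮 with ⋃_{S ∈ 𝒞} S = U. -/

import Mathlib

/-- Vertices of the graph constructed from a Set Cover instance with universe `U`,
family of sets indexed by `ι`, and path-length parameter `q`: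
`item u` is `v_u`, `path i j` is `v^j_{S_i}`, and `sink` is `z`. -/
inductive Vtx (U ι : Type) (q : ℕ) : Type where
  | item : U → Vtx U ι q
  | path : ι → Fin (q + 1) → Vtx U ι q
  | sink : Vtx U ι q
  deriving DecidableEq, Fintype

variable {U ι : Type} [Fintype U] [Fintype ι] [DecidableEq U] [DecidableEq ι]

/-- The arcs `A_U = {(v_u, v^0_S) | S ∈ 𝒮, u ∈ S}`. -/
def AU (Sets : ι → Finset U) (q : ℕ) : Finset (Vtx U ι q × Vtx U ι q) :=
  Finset.univ.biUnion fun i => (Sets i).image fun u => (Vtx.item u, Vtx.path i 0)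

/-- The path `P_S = {(v^0_S,v^1_S), …, (v^{q-1}_S,v^q_S), (v^q_S, z)}` for `S = S_i`. -/
def Ppath (U ι : Type) [DecidableEq U] [DecidableEq ι] (q : ℕ) (i : ι) :
    Finset (Vtx U ι q × Vtx U ι q) :=
  ((Finset.univ : Finset (Fin q)).image fun j =>
      ((Vtx.path i j.castSucc : Vtx U ι q), Vtx.path i j.succ)) ∪
    {(Vtx.path i (Fin.last q), Vtx.sink)}

/-- The arc set `A = A_U ∪ ⋃_{S ∈ 𝒮} P_S`. -/
def arcs (Sets : ι → Finset U) (q : ℕ) : Finset (Vtx U ι q × Vtx U ι q) :=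
  AU Sets q ∪ Finset.univ.biUnion (Ppath U ι q)

/-- There is a directed path from `x` to `y` all of whose arcs lie in `A'`. -/
def Reaches {α : Type} (A' : Finset (α × α)) (x y : α) : Prop :=
  Relation.ReflTransGen (fun a b => (a, b) ∈ A') x y

/-- `A' ⊆ A` is feasible if every `v_u` can reach `z` using only arcs of `A'`. -/
def Feasible {q : ℕ} (A' : Finset (Vtx U ι q × Vtx U ι q)) : Prop :=
  ∀ u : U, Reaches A' (Vtx.item u) Vtx.sink

/-- The number of arcs of `B` incident to `v` (in-degree plus out-degree). -/
def deg {α : Type} [DecidableEq α] (B : Finset (α × α)) (v : α) : ℕ :=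
  (B.filter fun a => a.1 = v).card + (B.filter fun a => a.2 = v).card

/-- The linecard objective `obj_k(B) = Σ_v ⌈deg_B(v)/k⌉`. -/
def obj {α : Type} [Fintype α] [DecidableEq α] (k : ℕ) (B : Finset (α × α)) : ℕ :=
  ∑ v : α, deg B v ⌈/⌉ k

/-!
A feasible arc set that enters `v^0_S` must contain all of `P_S`, because `P_S` is the only route
from `v^0_S` to `z`; so the sets whose paths lie in `A*` cover `U`. On its own vertices
`v^0_S, …, v^q_S` a path contributes a weight `W ≥ q + 1` to `obj_k` that does not depend on `S`,
hence `obj_k(A*) ≥ |𝒞*| W`, while a cover `𝒞` yields a feasible arc set of objective at most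
`2|U| + |𝒞| (W + 1)`. As `q > 2|U| + |𝒮|`, optimality of `A*` leaves no room for `|𝒞*| > |𝒞|`.
-/

open Finset Function

namespace Nat

lemma ceilDiv_le_self {k : ℕ} (hk : 0 < k) (d : ℕ) : d ⌈/⌉ k ≤ d :=
  (ceilDiv_le_iff_le_mul hk).2 (Nat.le_mul_of_pos_left d hk)

lemma ceilDiv_pos {k d : ℕ} (hk : 0 < k) (hd : 0 < d) : 0 < d ⌈/⌉ k := by
  by_contra! h
  have := (ceilDiv_le_iff_le_mul hk).1 h
  omega

lemma ceilDiv_le_ceilDiv {a b : ℕ} (h : a ≤ b) (k : ℕ) : a ⌈/⌉ k ≤ b ⌈/⌉ k := by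
  simp only [ceilDiv_eq_add_pred_div]
  exact Nat.div_le_div_right (by omega)

lemma ceilDiv_add_le {k : ℕ} (hk : 0 < k) (a b : ℕ) :
    (a + b) ⌈/⌉ k ≤ a ⌈/⌉ k + b ⌈/⌉ k := by
  rw [ceilDiv_le_iff_le_mul hk, mul_add]
  exact add_le_add (le_smul_ceilDiv hk) (le_smul_ceilDiv hk)

end Nat

section Degree

variable {α β : Type} [DecidableEq α]

lemma deg_mono {B C : Finset (α × α)} (h : B ⊆ C) (v : α) : deg B v ≤ deg C v :=
  add_le_add (card_le_card (filter_subset_filter _ h)) (card_le_card (filter_subset_filter _ h))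

lemma deg_union_le (B C : Finset (α × α)) (v : α) : deg (B ∪ C) v ≤ deg B v + deg C v := by
  simp only [deg, filter_union]
  have := card_union_le (B.filter fun a => a.1 = v) (C.filter fun a => a.1 = v)
  have := card_union_le (B.filter fun a => a.2 = v) (C.filter fun a => a.2 = v)
  omega

lemma sum_deg_eq_two_mul_card [Fintype α] (B : Finset (α × α)) : ∑ v, deg B v = 2 * #B := by
  simp only [deg, sum_add_distrib]
  rw [← card_eq_sum_card_fiberwise fun a _ => mem_univ a.1,
    ← card_eq_sum_card_fiberwise fun a _ => mem_univ a.2]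
  ring

lemma deg_image_prodMap [DecidableEq β] {f : β → α} (hf : Injective f) (B : Finset (β × β))
    (v : β) : deg (B.image (Prod.map f f)) (f v) = deg B v := by
  simp only [deg, filter_image, card_image_of_injective _ (hf.prodMap hf),
    Prod.map_fst, Prod.map_snd, hf.eq_iff]

lemma deg_image_prodMap_of_notMem_range {f : β → α} (B : Finset (β × β)) {v : α}
    (hv : v ∉ Set.range f) : deg (B.image (Prod.map f f)) v = 0 := by
  have hfv : ∀ a, f a ≠ v := fun a ha => hv ⟨a, ha⟩
  simp [deg, filter_image, hfv]

variable [Fintype α] {k : ℕ}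

lemma obj_le_two_mul_card (hk : 0 < k) (B : Finset (α × α)) : obj k B ≤ 2 * #B :=
  (sum_le_sum fun _ _ => Nat.ceilDiv_le_self hk _).trans_eq (sum_deg_eq_two_mul_card B)

lemma obj_union_le (hk : 0 < k) (B C : Finset (α × α)) : obj k (B ∪ C) ≤ obj k B + obj k C :=
  calc obj k (B ∪ C) ≤ ∑ v, (deg B v + deg C v) ⌈/⌉ k :=
        sum_le_sum fun v _ => Nat.ceilDiv_le_ceilDiv (deg_union_le B C v) k
    _ ≤ ∑ v, (deg B v ⌈/⌉ k + deg C v ⌈/⌉ k) := sum_le_sum fun _ _ => Nat.ceilDiv_add_le hk _ _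
    _ = obj k B + obj k C := sum_add_distrib

lemma obj_biUnion_le {ι' : Type} [DecidableEq ι'] (hk : 0 < k) (s : Finset ι')
    (f : ι' → Finset (α × α)) : obj k (s.biUnion f) ≤ ∑ i ∈ s, obj k (f i) := by
  induction s using Finset.induction_on with
  | empty => simp [obj, deg]
  | insert i s hi ih =>
    rw [biUnion_insert, sum_insert hi]
    exact (obj_union_le hk _ _).trans (add_le_add le_rfl ih)

lemma obj_image_prodMap [Fintype β] [DecidableEq β] {f : β → α} (hf : Injective f)
    (B : Finset (β × β)) : obj k (B.image (Prod.map f f)) = obj k B :=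
  (Fintype.sum_of_injective f hf _ _
    (fun v hv => by rw [deg_image_prodMap_of_notMem_range B hv, zero_ceilDiv])
    (fun v => by rw [deg_image_prodMap hf])).symm

end Degree

section Walk

variable {α : Type} [DecidableEq α] {n : ℕ}

def walkArcs (w : Fin (n + 1) → α) : Finset (α × α) :=
  univ.image fun t : Fin n => (w t.castSucc, w t.succ)

lemma mem_walkArcs {w : Fin (n + 1) → α} {a : α × α} :
    a ∈ walkArcs w ↔ ∃ t : Fin n, (w t.castSucc, w t.succ) = a := by
  simp [walkArcs]

lemma walkArcs_eq_image (w : Fin (n + 1) → α) :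
    walkArcs w = (walkArcs (id : Fin (n + 1) → Fin (n + 1))).image (Prod.map w w) := by
  simp only [walkArcs, image_image]
  rfl

lemma reaches_last_of_walkArcs_subset {w : Fin (n + 1) → α} {B : Finset (α × α)}
    (h : walkArcs w ⊆ B) (j : Fin (n + 1)) : Reaches B (w j) (w (Fin.last n)) := by
  induction j using Fin.reverseInduction with
  | last => exact .refl
  | cast t ih => exact .head (h (mem_walkArcs.2 ⟨t, rfl⟩)) ih

lemma walkArcs_subset_of_reaches {w : Fin (n + 1) → α} {B : Finset (α × α)} (hw : Injective w)
    (hout : ∀ t : Fin n, ∀ y, (w t.castSucc, y) ∈ B → y = w t.succ)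
    (h : Reaches B (w 0) (w (Fin.last n))) : walkArcs w ⊆ B := by
  suffices key : ∀ j, Reaches B (w j) (w (Fin.last n)) →
      ∀ t : Fin n, j ≤ t.castSucc → (w t.castSucc, w t.succ) ∈ B by
    intro a ha
    obtain ⟨t, rfl⟩ := mem_walkArcs.1 ha
    exact key 0 h t (Fin.zero_le _)
  intro j
  induction j using Fin.reverseInduction with
  | last => exact fun _ t ht => absurd ht (Fin.castSucc_lt_last t).not_ge
  | cast s ih =>
    intro hs t hst
    obtain hself | ⟨y, hy, hrest⟩ := Relation.ReflTransGen.cases_head hs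
    · exact absurd (hw hself) (Fin.castSucc_ne_last s)
    obtain rfl := hout s y hy
    obtain heq | hlt := hst.eq_or_lt
    · rwa [← Fin.castSucc_injective _ heq]
    · exact ih hrest t (Fin.succ_le_castSucc_iff.2 (Fin.castSucc_lt_castSucc_iff.1 hlt))

lemma one_le_deg_walkArcs_id_castSucc (t : Fin n) :
    1 ≤ deg (walkArcs (id : Fin (n + 1) → Fin (n + 1))) t.castSucc :=
  le_add_right (card_pos.2 ⟨_, mem_filter.2 ⟨mem_walkArcs.2 ⟨t, rfl⟩, rfl⟩⟩)

lemma deg_walkArcs_id_last_le_one :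
    deg (walkArcs (id : Fin (n + 1) → Fin (n + 1))) (Fin.last n) ≤ 1 := by
  have hout : (walkArcs id).filter
      (fun a : Fin (n + 1) × Fin (n + 1) => a.1 = Fin.last n) = ∅ := by
    refine filter_eq_empty_iff.2 fun a ha => ?_
    obtain ⟨t, rfl⟩ := mem_walkArcs.1 ha
    exact Fin.castSucc_ne_last t
  have hin : #((walkArcs id).filter
      (fun a : Fin (n + 1) × Fin (n + 1) => a.2 = Fin.last n)) ≤ 1 := by
    refine card_le_one.2 fun a ha b hb => ?_
    obtain ⟨ha, ht⟩ := mem_filter.1 ha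
    obtain ⟨hb, hs⟩ := mem_filter.1 hb
    obtain ⟨t, rfl⟩ := mem_walkArcs.1 ha
    obtain ⟨s, rfl⟩ := mem_walkArcs.1 hb
    rw [Fin.succ_injective _ (ht.trans hs.symm)]
  simpa [deg, hout] using hin

end Walk

section Construction

variable {q : ℕ}

abbrev pathVtx (i : ι) : Fin (q + 2) → Vtx U ι q :=
  Fin.snoc (α := fun _ => Vtx U ι q) (.path i) .sink

omit [Fintype U] [Fintype ι] [DecidableEq U] [DecidableEq ι] in
lemma pathVtx_injective (i : ι) : Injective (pathVtx (U := U) (q := q) i) :=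
  Fin.snoc_injective_of_injective (fun _ _ h => (Vtx.path.inj h).2) (by simp)

omit [Fintype U] [Fintype ι] [DecidableEq U] [DecidableEq ι] in
@[simp] lemma pathVtx_zero (i : ι) : pathVtx (U := U) (q := q) i 0 = .path i 0 :=
  Fin.snoc_castSucc (α := fun _ => Vtx U ι q) (i := 0) ..

omit [Fintype U] [Fintype ι] in
lemma Ppath_eq_walkArcs (i : ι) : Ppath U ι q i = walkArcs (pathVtx i) := by
  ext a
  simp only [Ppath, mem_walkArcs, Fin.exists_fin_succ', ← Fin.castSucc_succ,
    Fin.snoc_castSucc]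
  simp [eq_comm, or_comm]

omit [Fintype U] [Fintype ι] in
lemma reaches_sink_of_Ppath_subset {B : Finset (Vtx U ι q × Vtx U ι q)} {i : ι}
    (h : Ppath U ι q i ⊆ B) : Reaches B (.path i 0) .sink := by
  rw [Ppath_eq_walkArcs] at h
  simpa using reaches_last_of_walkArcs_subset h 0

variable {Sets : ι → Finset U}

omit [Fintype U] in
lemma exists_of_mem_arcs_item {u : U} {y : Vtx U ι q} (h : (.item u, y) ∈ arcs Sets q) :
    ∃ i, u ∈ Sets i ∧ y = .path i 0 := by
  simpa [arcs, AU, Ppath_eq_walkArcs, mem_walkArcs, eq_comm] using h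

omit [Fintype U] in
lemma eq_of_mem_arcs_path {i : ι} {j : Fin (q + 1)} {y : Vtx U ι q}
    (h : (.path i j, y) ∈ arcs Sets q) : y = pathVtx i j.succ := by
  simpa [arcs, AU, Ppath_eq_walkArcs, mem_walkArcs, eq_comm] using h

omit [Fintype U] in
lemma Ppath_subset_of_reaches {A : Finset (Vtx U ι q × Vtx U ι q)} (hA : A ⊆ arcs Sets q)
    {i : ι} (h : Reaches A (.path i 0) .sink) : Ppath U ι q i ⊆ A := by
  rw [Ppath_eq_walkArcs]
  refine walkArcs_subset_of_reaches (pathVtx_injective i) (fun t y hy => ?_) ?_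
  · exact eq_of_mem_arcs_path (hA (by simpa using hy))
  · simpa using h

omit [Fintype U] in
lemma cover_of_feasible {A : Finset (Vtx U ι q × Vtx U ι q)}
    (hA : A ⊆ arcs Sets q) (hfeas : Feasible A) (u : U) :
    ∃ i ∈ univ.filter (fun i : ι => Ppath U ι q i ⊆ A), u ∈ Sets i := by
  obtain hu | ⟨y, hy, hrest⟩ := Relation.ReflTransGen.cases_head (hfeas u)
  · cases hu
  obtain ⟨i, hi, rfl⟩ := exists_of_mem_arcs_item (hA hy)
  exact ⟨i, mem_filter.2 ⟨mem_univ i, Ppath_subset_of_reaches hA hrest⟩, hi⟩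

end Construction

/-- The part of `obj_k(P_S)` carried by `v^0_S, …, v^q_S`, computed on the model path
`0 → 1 → ⋯ → q + 1`; by `deg_Ppath_path` it is the same for every `S`. -/
def pathWeight (k q : ℕ) : ℕ :=
  ∑ j : Fin (q + 1), deg (walkArcs (id : Fin (q + 2) → Fin (q + 2))) j.castSucc ⌈/⌉ k

lemma succ_le_pathWeight {k : ℕ} (hk : 0 < k) (q : ℕ) : q + 1 ≤ pathWeight k q :=
  calc q + 1 = ∑ _j : Fin (q + 1), 1 := by simp
    _ ≤ pathWeight k q :=
        sum_le_sum fun j _ => Nat.ceilDiv_pos hk (one_le_deg_walkArcs_id_castSucc j)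

section Objective

variable {q k : ℕ}

lemma obj_Ppath_le (hk : 0 < k) (i : ι) : obj k (Ppath U ι q i) ≤ pathWeight k q + 1 := by
  rw [Ppath_eq_walkArcs, walkArcs_eq_image, obj_image_prodMap (pathVtx_injective i), obj,
    Fin.sum_univ_castSucc]
  exact add_le_add le_rfl
    ((ceilDiv_le_iff_le_mul hk).2 (deg_walkArcs_id_last_le_one.trans (by omega)))

omit [Fintype U] [Fintype ι] in
lemma deg_Ppath_path (i : ι) (j : Fin (q + 1)) :
    deg (Ppath U ι q i) (.path i j) =
      deg (walkArcs (id : Fin (q + 2) → Fin (q + 2))) j.castSucc := by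
  rw [Ppath_eq_walkArcs, walkArcs_eq_image]
  simpa using deg_image_prodMap (pathVtx_injective i) (walkArcs id) j.castSucc

lemma card_mul_pathWeight_le_obj {A : Finset (Vtx U ι q × Vtx U ι q)} {C : Finset ι}
    (hC : ∀ i ∈ C, Ppath U ι q i ⊆ A) : #C * pathWeight k q ≤ obj k A :=
  calc #C * pathWeight k q = ∑ i ∈ C, ∑ j, deg (Ppath U ι q i) (.path i j) ⌈/⌉ k := by
        simp [pathWeight, deg_Ppath_path]
    _ ≤ ∑ i ∈ C, ∑ j, deg A (.path i j) ⌈/⌉ k :=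
        sum_le_sum fun i hi => sum_le_sum fun j _ =>
          Nat.ceilDiv_le_ceilDiv (deg_mono (hC i hi) _) k
    _ = ∑ v ∈ (C ×ˢ univ).image fun x : ι × Fin (q + 1) => Vtx.path x.1 x.2,
          deg A v ⌈/⌉ k := by
        rw [sum_image fun x _ y _ h => Prod.ext_iff.2 (Vtx.path.inj h), sum_product]
    _ ≤ obj k A := sum_le_sum_of_subset (subset_univ _)

lemma exists_feasible_obj_le {Sets : ι → Finset U} (hk : 0 < k) {𝒞 : Finset ι}
    (h𝒞 : ∀ u, ∃ i ∈ 𝒞, u ∈ Sets i) :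
    ∃ B ⊆ arcs Sets q, Feasible B ∧
      obj k B ≤ 2 * Fintype.card U + #𝒞 * (pathWeight k q + 1) := by
  choose f hf𝒞 hfu using h𝒞
  let I : Finset (Vtx U ι q × Vtx U ι q) := univ.image fun u => (.item u, .path (f u) 0)
  refine ⟨I ∪ 𝒞.biUnion (Ppath U ι q), union_subset (fun a ha => ?_) ?_, fun u => ?_, ?_⟩
  · obtain ⟨u, -, rfl⟩ := mem_image.1 ha
    exact mem_union_left _ (mem_biUnion.2 ⟨f u, mem_univ _, mem_image_of_mem _ (hfu u)⟩)
  · exact (biUnion_subset_biUnion_of_subset_left _ (subset_univ 𝒞)).trans subset_union_right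
  · exact .head (mem_union_left _ (mem_image_of_mem _ (mem_univ u)))
      (reaches_sink_of_Ppath_subset fun _ ha =>
        mem_union_right _ (mem_biUnion.2 ⟨f u, hf𝒞 u, ha⟩))
  · calc obj k (I ∪ 𝒞.biUnion (Ppath U ι q))
        ≤ obj k I + ∑ i ∈ 𝒞, obj k (Ppath U ι q i) :=
          (obj_union_le hk _ _).trans (add_le_add le_rfl (obj_biUnion_le hk _ _))
      _ ≤ 2 * Fintype.card U + #𝒞 * (pathWeight k q + 1) :=
          add_le_add ((obj_le_two_mul_card hk I).trans (by gcongr; exact card_image_le))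
            (sum_le_card_nsmul _ _ _ fun i _ => obj_Ppath_le hk i)

end Objective

omit [DecidableEq ι] in
lemma card_le_sum_card_of_cover {Sets : ι → Finset U} {𝒞 : Finset ι}
    (h𝒞 : ∀ u, ∃ i ∈ 𝒞, u ∈ Sets i) : Fintype.card U ≤ ∑ i, #(Sets i) :=
  calc Fintype.card U = #(univ : Finset U) := card_univ.symm
    _ ≤ #(𝒞.biUnion Sets) := card_le_card fun u _ => mem_biUnion.2 (h𝒞 u)
    _ ≤ ∑ i ∈ 𝒞, #(Sets i) := card_biUnion_le
    _ ≤ ∑ i, #(Sets i) := sum_le_sum_of_subset (subset_univ 𝒞)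

theorem reduction_correctness_general (Sets : ι → Finset U) (q : ℕ)
    (hq : q > 2 * (Fintype.card ι + ∑ i : ι, (Sets i).card))
    (k : ℕ) (hk : 1 ≤ k)
    (Astar : Finset (Vtx U ι q × Vtx U ι q)) (hAstar : Astar ⊆ arcs Sets q)
    (hfeas : Feasible Astar)
    (hmin : ∀ B ⊆ arcs Sets q, Feasible B → obj k Astar ≤ obj k B) :
    (∀ u : U, ∃ i ∈ Finset.univ.filter (fun i : ι => Ppath U ι q i ⊆ Astar), u ∈ Sets i) ∧
    ∀ 𝒞 : Finset ι, (∀ u : U, ∃ i ∈ 𝒞, u ∈ Sets i) →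
      (Finset.univ.filter fun i : ι => Ppath U ι q i ⊆ Astar).card ≤ 𝒞.card := by
  set Cstar := univ.filter fun i : ι => Ppath U ι q i ⊆ Astar
  refine ⟨cover_of_feasible hAstar hfeas, fun 𝒞 h𝒞 => ?_⟩
  obtain ⟨B, hBA, hBfeas, hB⟩ := exists_feasible_obj_le (q := q) hk h𝒞
  have hlow : #Cstar * pathWeight k q ≤ obj k Astar :=
    card_mul_pathWeight_le_obj fun i hi => (mem_filter.1 hi).2
  have hW := succ_le_pathWeight hk q
  have hUS := card_le_sum_card_of_cover h𝒞
  have hCι := card_le_univ Cstar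
  by_contra! hlt
  nlinarith [hmin B hBA hBfeas]

/-- Correctness of the reduction: let the Set Cover instance satisfy `⋃_{S ∈ 𝒮} S = U`, let
`q > 2 · (|𝒮| + Σ_{S ∈ 𝒮} |S|)`, and let `k ≥ 1`. If `A* ⊆ A` is feasible and minimizes
`obj_k` among all feasible subsets of `A`, then `𝒞* := {S ∈ 𝒮 | P_S ⊆ A*}` is a
minimum-size set cover of `U`. -/
theorem reduction_correctness (Sets : ι → Finset U) (q : ℕ)
    (hU : ∀ u : U, ∃ i : ι, u ∈ Sets i)
    (hq : q > 2 * (Fintype.card ι + ∑ i : ι, (Sets i).card))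
    (k : ℕ) (hk : 1 ≤ k)
    (Astar : Finset (Vtx U ι q × Vtx U ι q)) (hAstar : Astar ⊆ arcs Sets q)
    (hfeas : Feasible Astar)
    (hmin : ∀ B ⊆ arcs Sets q, Feasible B → obj k Astar ≤ obj k B) :
    (∀ u : U, ∃ i ∈ Finset.univ.filter (fun i : ι => Ppath U ι q i ⊆ Astar), u ∈ Sets i) ∧
    ∀ 𝒞 : Finset ι, (∀ u : U, ∃ i ∈ 𝒞, u ∈ Sets i) →
      (Finset.univ.filter fun i : ι => Ppath U ι q i ⊆ Astar).card ≤ 𝒞.card :=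
  reduction_correctness_general Sets q hq k hk Astar hAstar hfeas hmin
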